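/- arXiv:2510.26454 — 4 statements merged into one kernel-verified Lean document; each statement's English description precedes it below -/
import Mathlib

section
/- Let N and q and p be natural numbers with q ≥ 1, and let v₁,…,v_q and w₁,…,w_p be vectors in ℝ^N such that v₁,…,v_q span ℝ^N. Then there exists a constant κ₀ > 0, depending only on the vectors v₁,…,v_q, with the following property: for every P ∈ ℝ^N, every R > 0 and all ε > ε' > 0, there exists Q ∈ 𝒫_{ε,R} such that for all Q' ∈ 𝒫_{ε',R} one has (Q' − Q)·P ≤ −κ₀ (ε − ε') |P|, where · denotes the Euclidean inner product and |P| the Euclidean norm. -/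
/-!
Since the `v j` span, the functionals `⟪v j, ·⟫` separate points, so in finite dimension
`c ‖P‖ ≤ ∑ j, |⟪v j, P⟫|` for some `c > 0`. Build `Q` by pushing each coefficient towards the end
of its interval that maximises its contribution to `⟪·, P⟫`: `s j` to `1 + (ε + ε') / 2` or
`-(ε + ε') / 2`, which beats every `Q' ∈ 𝒫_{ε',R}` by `(ε - ε') / 2 · ∑ j, |⟪v j, P⟫|`, and `r h` to
`±(R - δ)`, which loses at most `δ ∑ h, ‖w h‖ ‖P‖`, absorbed by taking `δ` small. So `κ₀ = c / 4`.
-/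

open Finset

/-- The set 𝒫_{ε,R} built from the vectors `v` and `w`:
all sums `∑ s_j • v j + ∑ r_h • w h` with `s_j ∈ (−ε, 1+ε)` and `r_h ∈ (−R, R)`. -/
def Pset {N q p : ℕ} (v : Fin q → EuclideanSpace ℝ (Fin N))
    (w : Fin p → EuclideanSpace ℝ (Fin N)) (ε R : ℝ) :
    Set (EuclideanSpace ℝ (Fin N)) :=
  {x | ∃ (s : Fin q → ℝ) (r : Fin p → ℝ),
    (∀ j, s j ∈ Set.Ioo (-ε) (1 + ε)) ∧ (∀ h, r h ∈ Set.Ioo (-R) R) ∧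
    x = ∑ j, s j • v j + ∑ h, r h • w h}

theorem exists_pos_mul_norm_le_sum_abs_inner {E ι : Type*} [NormedAddCommGroup E]
    [InnerProductSpace ℝ E] [FiniteDimensional ℝ E] [Fintype ι] {v : ι → E}
    (hspan : Submodule.span ℝ (Set.range v) = ⊤) :
    ∃ c > 0, ∀ x : E, c * ‖x‖ ≤ ∑ j, |inner ℝ (v j) x| := by
  let T : E →ₗ[ℝ] ι → ℝ := LinearMap.pi fun j => innerₛₗ ℝ (v j)
  have hker : LinearMap.ker T = ⊥ := by
    refine LinearMap.ker_eq_bot'.2 fun x hx => ?_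
    have : innerₛₗ ℝ x = 0 := LinearMap.ext_on_range hspan fun j => by
      simpa [T, real_inner_comm] using congrFun hx j
    simpa using LinearMap.congr_fun this x
  obtain ⟨K, -, hK⟩ := T.exists_antilipschitzWith hker
  obtain ⟨c, hc, hcT⟩ := antilipschitzWith_iff_exists_mul_le_norm.1 ⟨K, hK⟩
  refine ⟨c, hc, fun x => (hcT x).trans ?_⟩
  refine (pi_norm_le_iff_of_nonneg (by positivity)).2 fun j => ?_
  exact single_le_sum (f := fun j => |inner ℝ (v j) x|) (fun _ _ => abs_nonneg _) (mem_univ j)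

noncomputable def maximizingEndpoint (lo hi a : ℝ) : ℝ := if 0 ≤ a then hi else lo

theorem maximizingEndpoint_mem {lo hi : ℝ} {S : Set ℝ} (hlo : lo ∈ S) (hhi : hi ∈ S) (a : ℝ) :
    maximizingEndpoint lo hi a ∈ S := by
  unfold maximizingEndpoint; split_ifs <;> assumption

theorem mul_sub_maximizingEndpoint_mul_le {lo hi x : ℝ} (hx : x ∈ Set.Icc lo hi) (d a : ℝ) :
    x * a - maximizingEndpoint (lo - d) (hi + d) a * a ≤ -d * |a| := by
  obtain ⟨hlo, hhi⟩ := hx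
  unfold maximizingEndpoint
  split_ifs with ha
  · rw [abs_of_nonneg ha]; nlinarith
  · rw [abs_of_neg (not_le.1 ha)]; nlinarith

theorem inner_sum_smul_sub_maximizingEndpoint_le {E ι : Type*} [NormedAddCommGroup E]
    [InnerProductSpace ℝ E] [Fintype ι] (u : ι → E) (P : E) {lo hi : ℝ} {x : ι → ℝ}
    (hx : ∀ j, x j ∈ Set.Icc lo hi) (d : ℝ) :
    inner ℝ (∑ j, x j • u j - ∑ j, maximizingEndpoint (lo - d) (hi + d) (inner ℝ (u j) P) • u j) P
      ≤ -d * ∑ j, |inner ℝ (u j) P| := by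
  simp only [← sum_sub_distrib, ← sub_smul, sum_inner, real_inner_smul_left, sub_mul, mul_sum]
  exact sum_le_sum fun j _ => mul_sub_maximizingEndpoint_mul_le (hx j) d _

theorem exists_pos_le_mul_le {R η : ℝ} (hR : 0 < R) (hη : 0 < η) {M : ℝ} (hM : 0 ≤ M) :
    ∃ δ, 0 < δ ∧ δ ≤ R ∧ M * δ ≤ η := by
  obtain ⟨δ₀, hδ₀, hMδ₀⟩ := exists_pos_mul_lt hη M
  exact ⟨min R δ₀, lt_min hR hδ₀, min_le_left R δ₀,
    (mul_le_mul_of_nonneg_left (min_le_right R δ₀) hM).trans hMδ₀.le⟩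

theorem dist_lemma_general (N q p : ℕ)
    (v : Fin q → EuclideanSpace ℝ (Fin N)) (w : Fin p → EuclideanSpace ℝ (Fin N))
    (hspan : Submodule.span ℝ (Set.range v) = ⊤) :
    ∃ κ₀ > (0 : ℝ), ∀ (P : EuclideanSpace ℝ (Fin N)) (R ε ε' : ℝ),
      0 < R → 0 < ε' → ε' < ε →
      ∃ Q ∈ Pset v w ε R, ∀ Q' ∈ Pset v w ε' R,
        (inner ℝ (Q' - Q) P : ℝ) ≤ -κ₀ * (ε - ε') * ‖P‖ := by
  obtain ⟨c, hc, hcv⟩ := exists_pos_mul_norm_le_sum_abs_inner hspan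
  refine ⟨c / 4, by positivity, fun P R ε ε' hR hε' hεε => ?_⟩
  set M := ∑ h, ‖w h‖
  have hM : 0 ≤ M := sum_nonneg fun h _ => norm_nonneg (w h)
  obtain ⟨δ, hδ, hδR, hMδ⟩ :=
    exists_pos_le_mul_le hR (div_pos (mul_pos (sub_pos.2 hεε) hc) four_pos) hM
  let s j := maximizingEndpoint (-ε' - (ε - ε') / 2) (1 + ε' + (ε - ε') / 2) (inner ℝ (v j) P)
  let r h := maximizingEndpoint (-R - -δ) (R + -δ) (inner ℝ (w h) P)
  have hs : ∀ j, s j ∈ Set.Ioo (-ε) (1 + ε) := fun j =>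
    maximizingEndpoint_mem (S := Set.Ioo _ _) ⟨by linarith, by linarith⟩
      ⟨by linarith, by linarith⟩ _
  have hr : ∀ h, r h ∈ Set.Ioo (-R) R := fun h =>
    maximizingEndpoint_mem (S := Set.Ioo _ _) ⟨by linarith, by linarith⟩
      ⟨by linarith, by linarith⟩ _
  refine ⟨∑ j, s j • v j + ∑ h, r h • w h, ⟨s, r, hs, hr, rfl⟩, ?_⟩
  rintro _ ⟨s', r', hs', hr', rfl⟩
  have hv := inner_sum_smul_sub_maximizingEndpoint_le v P
    (fun j => Set.Ioo_subset_Icc_self (hs' j)) ((ε - ε') / 2)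
  have hw := inner_sum_smul_sub_maximizingEndpoint_le w P
    (fun h => Set.Ioo_subset_Icc_self (hr' h)) (-δ)
  have hwM : ∑ h, |inner ℝ (w h) P| ≤ M * ‖P‖ := by
    rw [sum_mul]; exact sum_le_sum fun h _ => abs_real_inner_le_norm _ _
  rw [add_sub_add_comm, inner_add_left]
  linarith [mul_le_mul_of_nonneg_left (hcv P) (by linarith : (0:ℝ) ≤ (ε - ε') / 2),
    mul_le_mul_of_nonneg_left hwM hδ.le, mul_le_mul_of_nonneg_right hMδ (norm_nonneg P)]

/-- The distance lemma: there is `κ₀ > 0`, depending only on `v`, such that for every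
`P`, every `R > 0` and all `ε > ε' > 0`, there is `Q ∈ 𝒫_{ε,R}` with
`(Q' − Q)·P ≤ −κ₀ (ε − ε') |P|` for all `Q' ∈ 𝒫_{ε',R}`. -/
theorem dist_lemma (N q p : ℕ) (hq : 1 ≤ q)
    (v : Fin q → EuclideanSpace ℝ (Fin N)) (w : Fin p → EuclideanSpace ℝ (Fin N))
    (hspan : Submodule.span ℝ (Set.range v) = ⊤) :
    ∃ κ₀ > (0 : ℝ), ∀ (P : EuclideanSpace ℝ (Fin N)) (R ε ε' : ℝ),
      0 < R → 0 < ε' → ε' < ε →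
      ∃ Q ∈ Pset v w ε R, ∀ Q' ∈ Pset v w ε' R,
        (inner ℝ (Q' - Q) P : ℝ) ≤ -κ₀ * (ε - ε') * ‖P‖ :=
  dist_lemma_general N q p v w hspan
end

section
/- Let q, n, d be positive integers, let λ : Fin q → Fin n → ℂ and μ : Fin q → Fin d → ℂ be families of nonzero complex numbers, and suppose (λ, μ) is strongly vertically Diophantine with constants D > 0 and τ ≥ 1. Let F assign to each i ∈ Fin q, j ∈ Fin d, Q ∈ ℕ^d with |Q| ≥ 2 and P ∈ ℤⁿ a complex number F_{i,j,Q,P}, and assume the compatibility relations: for all i, m ∈ Fin q, all j ∈ Fin d, all Q ∈ ℕ^d with |Q| ≥ 2 and all P ∈ ℤⁿ, (λ_i^P μ_i^Q − μ_{i,j}) · F_{m,j,Q,P} = (λ_m^P μ_m^Q − μ_{m,j}) · F_{i,j,Q,P}. Then there exists a unique family of complex numbers G_{j,Q,P} (for j ∈ Fin d, Q ∈ ℕ^d with |Q| ≥ 2, P ∈ ℤⁿ) such that for all m ∈ Fin q, j ∈ Fin d, Q with |Q| ≥ 2 and P ∈ ℤⁿ, (λ_m^P μ_m^Q − μ_{m,j})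 · G_{j,Q,P} = F_{m,j,Q,P}. Moreover, this solution satisfies |G_{j,Q,P}| ≤ ( max_{i ∈ Fin q} |F_{i,j,Q,P}| ) · (|P| + |Q|)^τ / D for all j, Q, P. -/
open scoped BigOperators

/-- Coefficient-level solution of the vertical cohomological equations
(Proposition `cohomo`): given a strongly vertically Diophantine pair `(λ, μ)` and
coefficients `F_{i,j,Q,P}` (for `|Q| ≥ 2`) satisfying the compatibility relations
`(λ_i^P μ_i^Q − μ_{i,j}) F_{m,j,Q,P} = (λ_m^P μ_m^Q − μ_{m,j}) F_{i,j,Q,P}`,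
there is a unique family `G_{j,Q,P}` (indexed by `j`, by `Q` with `|Q| ≥ 2`, and `P`)
with `(λ_m^P μ_m^Q − μ_{m,j}) G_{j,Q,P} = F_{m,j,Q,P}` for all `m`; moreover this
solution satisfies `|G_{j,Q,P}| ≤ (max_i |F_{i,j,Q,P}|) (|P|+|Q|)^τ / D`. -/
theorem formal_cohomological_solution (q n d : ℕ) (hq : 0 < q) (hn : 0 < n) (hd : 0 < d)
    (lam : Fin q → Fin n → ℂ) (mu : Fin q → Fin d → ℂ)
    (hlam : ∀ l i, lam l i ≠ 0) (hmu : ∀ l j, mu l j ≠ 0)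
    (D τ : ℝ) (hD : 0 < D) (hτ : 1 ≤ τ)
    (hdio : ∀ (P : Fin n → ℤ) (Q : Fin d → ℕ), 2 ≤ ∑ b, Q b → ∀ j : Fin d,
      D / (((∑ a, |(P a : ℝ)|) + ∑ b, (Q b : ℝ)) ^ τ) <
        ⨆ l : Fin q, ‖(∏ a, lam l a ^ P a) * (∏ b, mu l b ^ Q b) - mu l j‖)
    (F : Fin q → Fin d → (Fin d → ℕ) → (Fin n → ℤ) → ℂ)
    (hcompat : ∀ (i m : Fin q) (j : Fin d) (Q : Fin d → ℕ), 2 ≤ ∑ b, Q b →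
      ∀ P : Fin n → ℤ,
      ((∏ a, lam i a ^ P a) * (∏ b, mu i b ^ Q b) - mu i j) * F m j Q P =
        ((∏ a, lam m a ^ P a) * (∏ b, mu m b ^ Q b) - mu m j) * F i j Q P) :
    (∃! G : Fin d → {Q : Fin d → ℕ // 2 ≤ ∑ b, Q b} → (Fin n → ℤ) → ℂ,
      ∀ (m : Fin q) (j : Fin d) (Q : {Q : Fin d → ℕ // 2 ≤ ∑ b, Q b}) (P : Fin n → ℤ),
        ((∏ a, lam m a ^ P a) * (∏ b, mu m b ^ (Q : Fin d → ℕ) b) - mu m j) * G j Q P =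
          F m j (Q : Fin d → ℕ) P) ∧
    (∀ G : Fin d → {Q : Fin d → ℕ // 2 ≤ ∑ b, Q b} → (Fin n → ℤ) → ℂ,
      (∀ (m : Fin q) (j : Fin d) (Q : {Q : Fin d → ℕ // 2 ≤ ∑ b, Q b}) (P : Fin n → ℤ),
        ((∏ a, lam m a ^ P a) * (∏ b, mu m b ^ (Q : Fin d → ℕ) b) - mu m j) * G j Q P =
          F m j (Q : Fin d → ℕ) P) →
      ∀ (j : Fin d) (Q : {Q : Fin d → ℕ // 2 ≤ ∑ b, Q b}) (P : Fin n → ℤ),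
        ‖G j Q P‖ ≤ (⨆ i : Fin q, ‖F i j (Q : Fin d → ℕ) P‖) *
          (((∑ a, |(P a : ℝ)|) + ∑ b, ((Q : Fin d → ℕ) b : ℝ)) ^ τ) / D) := by

  have hne : Nonempty (Fin q) := ⟨⟨0, hq⟩⟩
  set c : Fin q → Fin d → (Fin d → ℕ) → (Fin n → ℤ) → ℂ :=
    fun m j Q P => (∏ a, lam m a ^ P a) * (∏ b, mu m b ^ Q b) - mu m j with hc
  have hSpos : ∀ (Q : {Q : Fin d → ℕ // 2 ≤ ∑ b, Q b}) (P : Fin n → ℤ),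
      (0:ℝ) < ((∑ a, |(P a : ℝ)|) + ∑ b, ((Q : Fin d → ℕ) b : ℝ)) ^ τ := by
    intro Q P
    apply Real.rpow_pos_of_pos
    have h1 : (0:ℝ) ≤ ∑ a, |(P a : ℝ)| := Finset.sum_nonneg fun a _ => abs_nonneg _
    have h2 : (2:ℝ) ≤ ∑ b, ((Q : Fin d → ℕ) b : ℝ) := by
      have := Q.2
      calc (2:ℝ) ≤ ((∑ b, (Q : Fin d → ℕ) b : ℕ) : ℝ) := by exact_mod_cast this
        _ = ∑ b, ((Q : Fin d → ℕ) b : ℝ) := by push_cast; ring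
    linarith
  have key : ∀ (j : Fin d) (Q : {Q : Fin d → ℕ // 2 ≤ ∑ b, Q b}) (P : Fin n → ℤ),
      ∃ l, D / (((∑ a, |(P a : ℝ)|) + ∑ b, ((Q : Fin d → ℕ) b : ℝ)) ^ τ) <
        ‖c l j (Q : Fin d → ℕ) P‖ := by
    intro j Q P
    obtain ⟨l, hl⟩ := exists_eq_ciSup_of_finite
      (f := fun l : Fin q => ‖c l j (Q : Fin d → ℕ) P‖)
    exact ⟨l, hl ▸ hdio P (Q : Fin d → ℕ) Q.2 j⟩
  have keypos : ∀ (j : Fin d) (Q : {Q : Fin d → ℕ // 2 ≤ ∑ b, Q b}) (P : Fin n → ℤ),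
      c (key j Q P).choose j (Q : Fin d → ℕ) P ≠ 0 := by
    intro j Q P
    have h := (key j Q P).choose_spec
    have hpos : (0:ℝ) < D / (((∑ a, |(P a : ℝ)|) + ∑ b, ((Q : Fin d → ℕ) b : ℝ)) ^ τ) :=
      div_pos hD (hSpos Q P)
    intro h0
    rw [h0] at h
    simp at h
    linarith
  refine ⟨⟨fun j Q P => F (key j Q P).choose j (Q : Fin d → ℕ) P /
      c (key j Q P).choose j (Q : Fin d → ℕ) P, ?_, ?_⟩, ?_⟩
  · intro m j Q P
    have hcomp := hcompat (key j Q P).choose m j (Q : Fin d → ℕ) Q.2 P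
    have hne0 := keypos j Q P
    rw [mul_div_assoc', div_eq_iff hne0]
    linear_combination -hcomp
  · intro G hG
    funext j Q P
    have h1 := hG (key j Q P).choose j Q P
    have hne0 := keypos j Q P
    rw [eq_div_iff hne0]
    linear_combination h1
  · intro G hG j Q P
    obtain ⟨l, hl⟩ := key j Q P
    have heq := hG l j Q P
    have hclpos : (0:ℝ) < ‖c l j (Q : Fin d → ℕ) P‖ :=
      lt_of_le_of_lt (le_of_lt (div_pos hD (hSpos Q P))) hl
    have hGeq0 : ‖c l j (Q : Fin d → ℕ) P‖ * ‖G j Q P‖ = ‖F l j (Q : Fin d → ℕ) P‖ := by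
      rw [← norm_mul]; exact congrArg norm heq
    have hGeq : ‖G j Q P‖ = ‖F l j (Q : Fin d → ℕ) P‖ / ‖c l j (Q : Fin d → ℕ) P‖ := by
      rw [eq_div_iff hclpos.ne']
      linear_combination hGeq0
    have hsup : ‖F l j (Q : Fin d → ℕ) P‖ ≤ ⨆ i : Fin q, ‖F i j (Q : Fin d → ℕ) P‖ :=
      le_ciSup (f := fun i : Fin q => ‖F i j (Q : Fin d → ℕ) P‖) (Finite.bddAbove_range _) l
    have hsup0 : (0:ℝ) ≤ ⨆ i : Fin q, ‖F i j (Q : Fin d → ℕ) P‖ :=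
      le_trans (norm_nonneg _) hsup
    rw [hGeq]
    calc ‖F l j (Q : Fin d → ℕ) P‖ / ‖c l j (Q : Fin d → ℕ) P‖
        ≤ (⨆ i : Fin q, ‖F i j (Q : Fin d → ℕ) P‖) /
          (D / (((∑ a, |(P a : ℝ)|) + ∑ b, ((Q : Fin d → ℕ) b : ℝ)) ^ τ)) :=
          div_le_div₀ hsup0 hsup (div_pos hD (hSpos Q P)) (le_of_lt hl)
      _ = (⨆ i : Fin q, ‖F i j (Q : Fin d → ℕ) P‖) *
          (((∑ a, |(P a : ℝ)|) + ∑ b, ((Q : Fin d → ℕ) b : ℝ)) ^ τ) / D := by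
          rw [div_div_eq_mul_div]
end

section
/- Let q, n, d be positive integers, let λ : Fin q → Fin n → ℂ and μ : Fin q → Fin d → ℂ be families of nonzero complex numbers, and suppose (λ, μ) is strongly vertically Diophantine with constants D > 0 and τ ≥ 1. Let F_{i,j,Q,P} (i ∈ Fin q, j ∈ Fin d, Q ∈ ℕ^d with |Q| ≥ 2, P ∈ ℤⁿ) satisfy the compatibility relations (λ_i^P μ_i^Q − μ_{i,j}) F_{m,j,Q,P} = (λ_m^P μ_m^Q − μ_{m,j}) F_{i,j,Q,P} for all i, m, j, Q, P, and let G_{j,Q,P} be the unique family with (λ_m^P μ_m^Q − μ_{m,j}) G_{j,Q,P} = F_{m,j,Q,P} for all m, j, Q, P. Then there exists a constant D' > 0, depending only on λ, μ, D and τ, such that for every m ∈ Fin q, j ∈ Fin d, Q ∈ ℕ^d with |Q| ≥ 2 and P ∈ ℤⁿ, |λ_m^P μ_m^Q| · |G_{j,Q,P}| ≤ ( max_{i ∈ Fin q} |F_{i,j,Q,P}| ) · (|P| + |Q|)^τ / D'. -/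
open scoped BigOperators

/-- Coefficient-level estimate for `G ∘ τ̂_m` (estimate `(estim-solcompo)`):
given a strongly vertically Diophantine pair `(λ, μ)`, there is `D' > 0`, depending only
on `λ, μ, D, τ`, such that for any coefficients `F_{i,j,Q,P}` satisfying the
compatibility relations and any family `G_{j,Q,P}` solving
`(λ_m^P μ_m^Q − μ_{m,j}) G_{j,Q,P} = F_{m,j,Q,P}`, one has
`|λ_m^P μ_m^Q| |G_{j,Q,P}| ≤ (max_i |F_{i,j,Q,P}|) (|P|+|Q|)^τ / D'`. -/
theorem composed_solution_estimate (q n d : ℕ) (hq : 0 < q) (hn : 0 < n) (hd : 0 < d)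
    (lam : Fin q → Fin n → ℂ) (mu : Fin q → Fin d → ℂ)
    (hlam : ∀ l i, lam l i ≠ 0) (hmu : ∀ l j, mu l j ≠ 0)
    (D τ : ℝ) (hD : 0 < D) (hτ : 1 ≤ τ)
    (hdio : ∀ (P : Fin n → ℤ) (Q : Fin d → ℕ), 2 ≤ ∑ b, Q b → ∀ j : Fin d,
      D / (((∑ a, |(P a : ℝ)|) + ∑ b, (Q b : ℝ)) ^ τ) <
        ⨆ l : Fin q, ‖(∏ a, lam l a ^ P a) * (∏ b, mu l b ^ Q b) - mu l j‖) :
    ∃ D' > (0 : ℝ), ∀ F : Fin q → Fin d → (Fin d → ℕ) → (Fin n → ℤ) → ℂ,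
      (∀ (i m : Fin q) (j : Fin d) (Q : Fin d → ℕ), 2 ≤ ∑ b, Q b → ∀ P : Fin n → ℤ,
        ((∏ a, lam i a ^ P a) * (∏ b, mu i b ^ Q b) - mu i j) * F m j Q P =
          ((∏ a, lam m a ^ P a) * (∏ b, mu m b ^ Q b) - mu m j) * F i j Q P) →
      ∀ G : Fin d → (Fin d → ℕ) → (Fin n → ℤ) → ℂ,
      (∀ (m : Fin q) (j : Fin d) (Q : Fin d → ℕ), 2 ≤ ∑ b, Q b → ∀ P : Fin n → ℤ,
        ((∏ a, lam m a ^ P a) * (∏ b, mu m b ^ Q b) - mu m j) * G j Q P = F m j Q P) →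
      ∀ (m : Fin q) (j : Fin d) (Q : Fin d → ℕ), 2 ≤ ∑ b, Q b → ∀ P : Fin n → ℤ,
        ‖(∏ a, lam m a ^ P a) * (∏ b, mu m b ^ Q b)‖ * ‖G j Q P‖ ≤
          (⨆ i : Fin q, ‖F i j Q P‖) *
            (((∑ a, |(P a : ℝ)|) + ∑ b, (Q b : ℝ)) ^ τ) / D' := by

  haveI : Nonempty (Fin q) := ⟨⟨0, hq⟩⟩
  haveI : Nonempty (Fin d) := ⟨⟨0, hd⟩⟩
  set M : ℝ := ⨆ p : Fin q × Fin d, ‖mu p.1 p.2‖ with hM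
  have hM0 : 0 ≤ M := le_ciSup_of_le (Set.Finite.bddAbove (Set.finite_range _))
    (Classical.arbitrary _) (norm_nonneg _)
  refine ⟨D / (D + M), by positivity, ?_⟩
  intro F hF G hG m j Q hQ P
  set S : ℝ := (∑ a, |(P a : ℝ)|) + ∑ b, (Q b : ℝ) with hSdef
  have hS2 : (2 : ℝ) ≤ S := by
    have h1 : (0:ℝ) ≤ ∑ a, |(P a : ℝ)| := Finset.sum_nonneg fun a _ => abs_nonneg _
    have h2 : (2:ℝ) ≤ ∑ b, (Q b : ℝ) := by
      have : ((2:ℕ):ℝ) ≤ ((∑ b, Q b : ℕ) : ℝ) := Nat.cast_le.mpr hQ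
      simpa [Nat.cast_sum] using this
    simp only [hSdef]; linarith
  have hSτ : 1 ≤ S ^ τ := Real.one_le_rpow (by linarith) (by linarith)
  have hSτ0 : (0:ℝ) < S ^ τ := lt_of_lt_of_le one_pos hSτ
  obtain ⟨l, hl⟩ := exists_eq_ciSup_of_finite
    (f := fun l : Fin q => ‖(∏ a, lam l a ^ P a) * (∏ b, mu l b ^ Q b) - mu l j‖)
  have hdl : D / S ^ τ < ‖(∏ a, lam l a ^ P a) * (∏ b, mu l b ^ Q b) - mu l j‖ := by
    rw [hl]; exact hdio P Q hQ j
  set supF : ℝ := ⨆ i : Fin q, ‖F i j Q P‖ with hsupF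
  have hbdd : BddAbove (Set.range fun i : Fin q => ‖F i j Q P‖) :=
    Set.Finite.bddAbove (Set.finite_range _)
  have hsupF0 : 0 ≤ supF := le_ciSup_of_le hbdd (Classical.arbitrary _) (norm_nonneg _)
  have hFle : ∀ i : Fin q, ‖F i j Q P‖ ≤ supF := fun i => le_ciSup hbdd i
  have hGb : ‖G j Q P‖ ≤ supF * S ^ τ / D := by
    have h1 : ‖(∏ a, lam l a ^ P a) * (∏ b, mu l b ^ Q b) - mu l j‖ * ‖G j Q P‖ ≤ supF := by
      rw [← norm_mul, hG l j Q hQ P]; exact hFle l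
    have h2 : D / S ^ τ * ‖G j Q P‖ ≤ supF :=
      le_trans (mul_le_mul_of_nonneg_right hdl.le (norm_nonneg _)) h1
    rw [div_mul_eq_mul_div, div_le_iff₀ hSτ0] at h2
    rw [le_div_iff₀ hD]
    linarith
  have hmub : ‖mu m j‖ ≤ M := le_ciSup (f := fun p : Fin q × Fin d => ‖mu p.1 p.2‖)
    (Set.Finite.bddAbove (Set.finite_range _)) (m, j)
  have key : ‖(∏ a, lam m a ^ P a) * (∏ b, mu m b ^ Q b)‖ * ‖G j Q P‖ ≤
      supF + M * (supF * S ^ τ / D) := by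
    have hid : (∏ a, lam m a ^ P a) * (∏ b, mu m b ^ Q b) * G j Q P =
        F m j Q P + mu m j * G j Q P := by
      have := hG m j Q hQ P; ring_nf at this ⊢; linear_combination this
    calc ‖(∏ a, lam m a ^ P a) * (∏ b, mu m b ^ Q b)‖ * ‖G j Q P‖
        = ‖F m j Q P + mu m j * G j Q P‖ := by rw [← norm_mul, hid]
      _ ≤ ‖F m j Q P‖ + ‖mu m j‖ * ‖G j Q P‖ := by
          simpa [norm_mul] using norm_add_le (F m j Q P) (mu m j * G j Q P)
      _ ≤ supF + M * (supF * S ^ τ / D) := by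
          have h3 := mul_le_mul hmub hGb (norm_nonneg _) hM0
          have h4 := hFle m
          linarith
  refine key.trans ?_
  rw [div_div_eq_mul_div]
  rw [le_div_iff₀ hD]
  have h1 : supF ≤ supF * S ^ τ := le_mul_of_one_le_right hsupF0 hSτ
  nlinarith [div_mul_cancel₀ (supF * S ^ τ) hD.ne', mul_le_mul_of_nonneg_right h1 hD.le,
    mul_nonneg hM0 hsupF0]
end

section
/- Let n ≥ 1 and let f : ℂⁿ → ℂ be continuous on the closed unit polydisc { z ∈ ℂⁿ : |z_i| ≤ 1 for all i } and holomorphic on the open unit polydisc { z ∈ ℂⁿ : |z_i| < 1 for all i }. Let k ∈ {1, …, n} and let w ∈ ℂ with |w| = 1. Then the function of the remaining n − 1 variables, (z₁, …, z_{k−1}, z_{k+1}, …, zₙ) ↦ f(z₁, …, z_{k−1}, w, z_{k+1}, …, zₙ), is holomorphic on the open unit polydisc { z ∈ ℂ^{n−1} : |z_i| < 1 for all i }. -/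
/-!
Approximate `w` from inside the unit disc by a sequence `c n`. The slices
`z ↦ f (insertNth k (c n) z)` are holomorphic on the open polydisc, and by uniform continuity of
`f` on the compact closed polydisc they converge uniformly to the boundary slice. A uniform limit
of holomorphic functions of several variables is holomorphic: Cauchy's estimate on complex lines
makes the derivatives uniformly Cauchy, so they converge as well and the limit of the
derivatives is the derivative of the limit.
-/
open Metric Filter Topology

section UniformLimit

variable {E F : Type*} [NormedAddCommGroup E] [NormedSpace ℂ E]
  [NormedAddCommGroup F] [NormedSpace ℂ F]

theorem norm_fderiv_le_of_forall_mem_closedBall_norm_le {f : E → F} {c : E} {R C : ℝ}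
    (hR : 0 < R) (hd : DiffContOnCl ℂ f (ball c R)) (hC : ∀ z ∈ closedBall c R, ‖f z‖ ≤ C) :
    ‖fderiv ℂ f c‖ ≤ C / R := by
  have hC₀ : 0 ≤ C := (norm_nonneg _).trans (hC c (mem_closedBall_self hR.le))
  refine ContinuousLinearMap.opNorm_le_of_unit_norm (by positivity) fun v hv => ?_
  set line : ℂ → E := fun ζ => c + ζ • v
  have hdist : ∀ ζ : ℂ, dist (line ζ) c = ‖ζ‖ := by simp [line, dist_eq_norm, norm_smul, hv]
  have hline : HasDerivAt line v 0 :=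
    (((hasDerivAt_id (0 : ℂ)).smul_const v).const_add c).congr_deriv (one_smul ℂ v)
  have hslice : HasDerivAt (f ∘ line) (fderiv ℂ f c v) 0 := by
    have hfc : HasFDerivAt f (fderiv ℂ f c) (line 0) := by
      simpa [line] using (hd.differentiableAt isOpen_ball (mem_ball_self hR)).hasFDerivAt
    exact hfc.comp_hasDerivAt 0 hline
  rw [← hslice.deriv]
  refine Complex.norm_deriv_le_of_forall_mem_sphere_norm_le hR ?_ fun ζ hζ => hC _ ?_
  · refine hd.comp (by fun_prop : Differentiable ℂ line).diffContOnCl fun ζ hζ => ?_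
    simpa [mem_ball, hdist] using hζ
  · simpa [mem_closedBall, hdist] using hζ.le

theorem UniformCauchySeqOn.fderiv_ball {ι : Type*} {l : Filter ι} {f : ι → E → F} {c : E}
    {R : ℝ} (hR : 0 < R) (hf : ∀ i, DifferentiableOn ℂ (f i) (ball c (2 * R)))
    (hcau : UniformCauchySeqOn f l (ball c (2 * R))) :
    UniformCauchySeqOn (fun i => fderiv ℂ (f i)) l (ball c R) := by
  intro u hu
  obtain ⟨ε, hε, hεu⟩ := Metric.mem_uniformity_dist.1 hu
  filter_upwards [hcau _ (dist_mem_uniformity (by positivity : 0 < ε * R / 2))]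
    with ⟨i, j⟩ hij z hz
  have hsub : closedBall z R ⊆ ball c (2 * R) :=
    closedBall_subset_ball' (by linarith [mem_ball.1 hz])
  have hnhds : ball c (2 * R) ∈ 𝓝 z :=
    isOpen_ball.mem_nhds (hsub (mem_closedBall_self hR.le))
  have hest : ‖fderiv ℂ (fun x => f i x - f j x) z‖ ≤ ε * R / 2 / R :=
    norm_fderiv_le_of_forall_mem_closedBall_norm_le hR
      (((hf i).sub (hf j)).diffContOnCl_ball hsub) fun x hx => by
        simpa [dist_eq_norm] using (hij x (hsub hx)).le
  apply hεu
  calc dist (fderiv ℂ (f i) z) (fderiv ℂ (f j) z)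
      = ‖fderiv ℂ (fun x => f i x - f j x) z‖ := by
        rw [dist_eq_norm, fderiv_fun_sub ((hf i).differentiableAt hnhds)
          ((hf j).differentiableAt hnhds)]
    _ ≤ ε * R / 2 / R := hest
    _ = ε / 2 := by field_simp
    _ < ε := half_lt_self hε

theorem TendstoUniformlyOn.differentiableOn [CompleteSpace F] {ι : Type*} {l : Filter ι}
    [l.NeBot] {f : ι → E → F} {g : E → F} {s : Set E} (hs : IsOpen s)
    (hf : ∀ i, DifferentiableOn ℂ (f i) s) (hfg : TendstoUniformlyOn f g l s) :
    DifferentiableOn ℂ g s := by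
  intro x hx
  obtain ⟨ε, hε, hball⟩ := Metric.isOpen_iff.1 hs x hx
  have hball' : ball x (2 * (ε / 2)) ⊆ s := by rwa [mul_div_cancel₀ _ two_ne_zero]
  have hR : 0 < ε / 2 := by positivity
  have hcau : UniformCauchySeqOn (fun i => fderiv ℂ (f i)) l (ball x (ε / 2)) :=
    (hfg.mono hball').uniformCauchySeqOn.fderiv_ball hR fun i => (hf i).mono hball'
  have hsub : ball x (ε / 2) ⊆ s := (ball_subset_ball (by linarith)).trans hball'
  have hlim : TendstoUniformlyOn (fun i => fderiv ℂ (f i))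
      (fun y => limUnder l fun i => fderiv ℂ (f i) y) l (ball x (ε / 2)) :=
    hcau.tendstoUniformlyOn_of_tendsto fun y hy =>
      tendsto_nhds_limUnder (CompleteSpace.complete (hcau.cauchy_map hy))
  refine (hasFDerivAt_of_tendstoUniformlyOn isOpen_ball hlim (fun i y hy => ?_)
    (fun y hy => hfg.tendsto_at (hsub hy)) (mem_ball_self hR)).differentiableAt
    |>.differentiableWithinAt
  exact ((hf i).differentiableAt (hs.mem_nhds (hsub hy))).hasFDerivAt

end UniformLimit

theorem setOf_forall_norm_lt_eq_ball_zero {ι E : Type*} [Fintype ι] [SeminormedAddGroup E]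
    {r : ℝ} (hr : 0 < r) : {z : ι → E | ∀ i, ‖z i‖ < r} = ball 0 r := by
  ext z
  simp [pi_norm_lt_iff hr]

theorem setOf_forall_norm_le_eq_closedBall_zero {ι E : Type*} [Fintype ι] [SeminormedAddGroup E]
    {r : ℝ} (hr : 0 ≤ r) : {z : ι → E | ∀ i, ‖z i‖ ≤ r} = closedBall 0 r := by
  ext z
  simp [pi_norm_le_iff_of_nonneg hr]

namespace Fin

variable {m : ℕ}

theorem norm_insertNth {E : Type*} [SeminormedAddGroup E] (k : Fin (m + 1)) (a : E)
    (z : Fin m → E) : ‖k.insertNth (α := fun _ => E) a z‖ = max ‖a‖ ‖z‖ := by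
  simpa using k.dist_insertNth_insertNth (α := fun _ => E) a 0 z 0

theorem differentiable_insertNth {𝕜 E : Type*} [NontriviallyNormedField 𝕜]
    [NormedAddCommGroup E] [NormedSpace 𝕜 E] (k : Fin (m + 1)) (a : E) :
    Differentiable 𝕜 (k.insertNth (α := fun _ => E) a) := by
  refine differentiable_pi.2 fun j => k.succAboveCases ?_ (fun i => ?_) j
  · simp
  · simpa using differentiable_apply i

theorem tendstoUniformly_insertNth {E ι : Type*} [PseudoMetricSpace E] {l : Filter ι}
    {c : ι → E} {w : E} (hc : Tendsto c l (𝓝 w)) (k : Fin (m + 1)) :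
    TendstoUniformly (fun n => k.insertNth (α := fun _ => E) (c n))
      (k.insertNth (α := fun _ => E) w) l := by
  refine Metric.tendstoUniformly_iff.2 fun ε hε => ?_
  filter_upwards [Metric.tendsto_nhds.1 hc ε hε] with n hn z
  simpa [k.dist_insertNth_insertNth, dist_comm] using hn

end Fin

/-- Boundary slices of functions in `A(𝔻ⁿ)`:
if `f` is continuous on the closed unit polydisc in `ℂⁿ` (with `n = m + 1 ≥ 1`) and
holomorphic on the open unit polydisc, then for any coordinate `k` and any `w` with
`|w| = 1`, the function of the remaining variables obtained by fixing the `k`-th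
coordinate equal to `w` is holomorphic on the open unit polydisc in `ℂ^{n−1}`. -/
theorem polydisc_boundary_slice (m : ℕ) (f : (Fin (m + 1) → ℂ) → ℂ)
    (hfc : ContinuousOn f {z : Fin (m + 1) → ℂ | ∀ i, ‖z i‖ ≤ 1})
    (hfd : DifferentiableOn ℂ f {z : Fin (m + 1) → ℂ | ∀ i, ‖z i‖ < 1})
    (k : Fin (m + 1)) (w : ℂ) (hw : ‖w‖ = 1) :
    DifferentiableOn ℂ (fun z : Fin m → ℂ => f (Fin.insertNth k w z))
      {z : Fin m → ℂ | ∀ i, ‖z i‖ < 1} := by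
  rw [setOf_forall_norm_lt_eq_ball_zero one_pos] at hfd ⊢
  rw [setOf_forall_norm_le_eq_closedBall_zero zero_le_one] at hfc
  obtain ⟨c, hc_mem, hc_lim⟩ : ∃ c : ℕ → ℂ, (∀ n, c n ∈ ball 0 1) ∧ Tendsto c atTop (𝓝 w) :=
    mem_closure_iff_seq_limit.1 (by simp [closure_ball (0 : ℂ) one_ne_zero, hw])
  simp only [mem_ball_zero_iff] at hc_mem
  have hslice : ∀ n, DifferentiableOn ℂ (fun z => f (k.insertNth (c n) z)) (ball 0 1) :=
    fun n => hfd.comp (k.differentiable_insertNth (c n)).differentiableOn fun z hz => by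
      rw [mem_ball_zero_iff, Fin.norm_insertNth]
      exact max_lt (hc_mem n) (mem_ball_zero_iff.1 hz)
  have hunif : UniformContinuousOn f (closedBall 0 1) :=
    (isCompact_closedBall 0 1).uniformContinuousOn_of_continuous hfc
  have hconv : TendstoUniformlyOn (fun n z => f (k.insertNth (c n) z))
      (fun z => f (k.insertNth w z)) atTop (ball 0 1) :=
    hunif.comp_tendstoUniformlyOn_eventually
      (Eventually.of_forall fun n z hz => by
        rw [mem_closedBall_zero_iff, Fin.norm_insertNth]
        exact max_le (hc_mem n).le (mem_ball_zero_iff.1 hz).le)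
      (fun z hz => by
        rw [mem_closedBall_zero_iff, Fin.norm_insertNth, hw]
        exact max_le le_rfl (mem_ball_zero_iff.1 hz).le)
      (Fin.tendstoUniformly_insertNth hc_lim k).tendstoUniformlyOn
  exact hconv.differentiableOn isOpen_ball hslice
end
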